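/- arXiv:1012.5346 — 2 statements merged into one kernel-verified Lean document; each statement's English description precedes it below -/
import Mathlib

section
/- Let R = k[[x]] over a field k, and let a ≥ b + 2 be positive integers. Then there is a short exact sequence of R-modules 0 → R/(x^{a−1}) → R/(x^a) ⊕ R/(x^b) → R/(x^{b+1}) → 0, where the first map sends 1 to (x, 1). Consequently, R/(x^a) ⊕ R/(x^b) degenerates by an extension to R/(x^{a−1}) ⊕ R/(x^{b+1}). -/
/-!
For any non-zero-divisor `x` of a commutative ring `R` and `m ≤ n`, the maps `r ↦ (x r, r)` and
`(u, v) ↦ u - x v` form a short exact sequence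
`0 → R/(x^n) → R/(x^(n+1)) × R/(x^m) → R/(x^(m+1)) → 0`: the first is injective because `x` can be
cancelled, and if `u ≡ x v` modulo `x^(m+1)`, say `u - x v = x^(m+1) w`, then `(u, v)` is the image
of `v + x^m w`. Any short exact sequence `0 → U → M → V → 0` exhibits a degeneration of `M` by an
extension to `U × V`; take `x = X`, `n = a - 1`, `m = b` in `k[[X]]`.
-/

open PowerSeries

/-- `M` degenerates by an extension to `N`: there is a short exact sequence
`0 → U → M → V → 0` with `N ≅ U ⊕ V`. -/
def DegeneratesByExt (R : Type) [CommRing R]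
    (M N : Type) [AddCommGroup M] [Module R M] [AddCommGroup N] [Module R N] : Prop :=
  ∃ U : Submodule R M, Nonempty (N ≃ₗ[R] (U × (M ⧸ U)))

theorem degeneratesByExt_of_exact {R : Type} [CommRing R] {U M V : Type}
    [AddCommGroup U] [Module R U] [AddCommGroup M] [Module R M] [AddCommGroup V] [Module R V]
    {f : U →ₗ[R] M} {g : M →ₗ[R] V} (hf : Function.Injective f) (hg : Function.Surjective g)
    (hfg : Function.Exact f g) : DegeneratesByExt R M (U × V) :=
  ⟨LinearMap.range f, ⟨(LinearEquiv.ofInjective f hf).prodCongr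
    ((Submodule.quotEquivOfEq _ _ hfg.linearMap_ker_eq.symm).trans
      (g.quotKerEquivOfSurjective hg)).symm⟩⟩

section QuotientPow

variable {R : Type*} [CommRing R] (x : R)

theorem span_pow_le_span_pow {m n : ℕ} (h : m ≤ n) :
    Ideal.span {x ^ n} ≤ Ideal.span {x ^ m} :=
  Ideal.span_singleton_le_span_singleton.mpr (pow_dvd_pow x h)

noncomputable def mulQuotPowSucc (n : ℕ) :
    (R ⧸ Ideal.span {x ^ n}) →ₗ[R] R ⧸ Ideal.span {x ^ (n + 1)} :=
  Submodule.mapQ _ _ (LinearMap.mulLeft R x) <|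
    (Submodule.span_singleton_le_iff_mem _ _).mpr <| Ideal.mem_span_singleton.mpr <|
      by simp [pow_succ']

@[simp]
theorem mulQuotPowSucc_mk (n : ℕ) (r : R) :
    mulQuotPowSucc x n (Submodule.Quotient.mk r) = Submodule.Quotient.mk (x * r) :=
  rfl

theorem mulQuotPowSucc_injective (hx : IsLeftRegular x) (n : ℕ) :
    Function.Injective (mulQuotPowSucc x n) := by
  rw [← LinearMap.ker_eq_bot, eq_bot_iff]
  intro y hy
  obtain ⟨r, rfl⟩ := Submodule.Quotient.mk_surjective _ y
  rw [LinearMap.mem_ker, mulQuotPowSucc_mk, Submodule.Quotient.mk_eq_zero,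
    Ideal.mem_span_singleton] at hy
  obtain ⟨c, hc⟩ := hy
  rw [Submodule.mem_bot, Submodule.Quotient.mk_eq_zero, Ideal.mem_span_singleton]
  exact ⟨c, hx (by simp only [hc, pow_succ', mul_assoc])⟩

variable {m n : ℕ} (hmn : m ≤ n)

noncomputable def quotPowPairMap :
    (R ⧸ Ideal.span {x ^ n}) →ₗ[R] (R ⧸ Ideal.span {x ^ (n + 1)}) × (R ⧸ Ideal.span {x ^ m}) :=
  (mulQuotPowSucc x n).prod (Submodule.factor (span_pow_le_span_pow x hmn))

noncomputable def quotPowDiffMap :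
    (R ⧸ Ideal.span {x ^ (n + 1)}) × (R ⧸ Ideal.span {x ^ m}) →ₗ[R] R ⧸ Ideal.span {x ^ (m + 1)} :=
  (Submodule.factor (span_pow_le_span_pow x (Nat.succ_le_succ hmn))).comp (LinearMap.fst _ _ _) -
    (mulQuotPowSucc x m).comp (LinearMap.snd _ _ _)

@[simp]
theorem quotPowPairMap_mk (r : R) :
    quotPowPairMap x hmn (Submodule.Quotient.mk r) =
      (Submodule.Quotient.mk (x * r), Submodule.Quotient.mk r) :=
  rfl

@[simp]
theorem quotPowDiffMap_mk (u v : R) :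
    quotPowDiffMap x hmn (Submodule.Quotient.mk u, Submodule.Quotient.mk v) =
      Submodule.Quotient.mk (u - x * v) :=
  rfl

theorem quotPowPairMap_one :
    quotPowPairMap x hmn 1 = (Ideal.Quotient.mk _ x, 1) := by
  simpa using quotPowPairMap_mk x hmn 1

theorem quotPowPairMap_injective (hx : IsLeftRegular x) :
    Function.Injective (quotPowPairMap x hmn) :=
  fun _ _ h ↦ mulQuotPowSucc_injective x hx n (congrArg Prod.fst h)

theorem quotPowDiffMap_surjective : Function.Surjective (quotPowDiffMap x hmn) := by
  intro y
  obtain ⟨r, rfl⟩ := Submodule.Quotient.mk_surjective _ y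
  exact ⟨(Submodule.Quotient.mk r, 0), by simpa using quotPowDiffMap_mk x hmn r 0⟩

theorem quotPowPairMap_exact : Function.Exact (quotPowPairMap x hmn) (quotPowDiffMap x hmn) := by
  rintro ⟨y₁, y₂⟩
  obtain ⟨u, rfl⟩ := Submodule.Quotient.mk_surjective _ y₁
  obtain ⟨v, rfl⟩ := Submodule.Quotient.mk_surjective _ y₂
  constructor
  · rw [quotPowDiffMap_mk, Submodule.Quotient.mk_eq_zero, Ideal.mem_span_singleton]
    rintro ⟨w, hw⟩
    refine ⟨Submodule.Quotient.mk (v + x ^ m * w), ?_⟩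
    rw [quotPowPairMap_mk, Prod.mk.injEq]
    constructor
    · congr 1; linear_combination -hw
    · rw [Submodule.Quotient.eq, Ideal.mem_span_singleton]
      exact ⟨w, by ring⟩
  · rintro ⟨y, hy⟩
    obtain ⟨r, rfl⟩ := Submodule.Quotient.mk_surjective _ y
    rw [← hy, quotPowPairMap_mk, quotPowDiffMap_mk, sub_self, Submodule.Quotient.mk_zero]

end QuotientPow

theorem stmt5_general (k : Type) [Field k] (a b : ℕ) (hab : b + 2 ≤ a) :
    (∃ (f : (PowerSeries k ⧸ Ideal.span {(X : PowerSeries k) ^ (a - 1)}) →ₗ[PowerSeries k]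
          ((PowerSeries k ⧸ Ideal.span {(X : PowerSeries k) ^ a}) ×
            (PowerSeries k ⧸ Ideal.span {(X : PowerSeries k) ^ b})))
        (g : ((PowerSeries k ⧸ Ideal.span {(X : PowerSeries k) ^ a}) ×
            (PowerSeries k ⧸ Ideal.span {(X : PowerSeries k) ^ b})) →ₗ[PowerSeries k]
          (PowerSeries k ⧸ Ideal.span {(X : PowerSeries k) ^ (b + 1)})),
        Function.Injective f ∧ Function.Surjective g ∧ Function.Exact f g ∧
        f 1 = (Ideal.Quotient.mk _ (X : PowerSeries k), 1)) ∧
    DegeneratesByExt (PowerSeries k)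
      ((PowerSeries k ⧸ Ideal.span {(X : PowerSeries k) ^ a}) ×
        (PowerSeries k ⧸ Ideal.span {(X : PowerSeries k) ^ b}))
      ((PowerSeries k ⧸ Ideal.span {(X : PowerSeries k) ^ (a - 1)}) ×
        (PowerSeries k ⧸ Ideal.span {(X : PowerSeries k) ^ (b + 1)})) := by
  obtain ⟨n, rfl⟩ : ∃ n, a = n + 1 := ⟨a - 1, by omega⟩
  have hbn : b ≤ n := by omega
  have hX : IsLeftRegular (X : PowerSeries k) := (IsRegular.of_ne_zero X_ne_zero).left
  rw [Nat.add_sub_cancel]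
  have hf := quotPowPairMap_injective _ hbn hX
  have hg := quotPowDiffMap_surjective (X : PowerSeries k) hbn
  have hfg := quotPowPairMap_exact (X : PowerSeries k) hbn
  exact ⟨⟨_, _, hf, hg, hfg, quotPowPairMap_one _ hbn⟩, degeneratesByExt_of_exact hf hg hfg⟩

/-- Over `R = k[[x]]`, for `a ≥ b + 2` there is a short exact sequence
`0 → R/(x^{a-1}) → R/(x^a) ⊕ R/(x^b) → R/(x^{b+1}) → 0` whose first map sends `1` to
`(x, 1)`; consequently `R/(x^a) ⊕ R/(x^b)` degenerates by an extension to
`R/(x^{a-1}) ⊕ R/(x^{b+1})`. -/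
theorem stmt5 (k : Type) [Field k] (a b : ℕ) (hb : 0 < b) (hab : b + 2 ≤ a) :
    (∃ (f : (PowerSeries k ⧸ Ideal.span {(X : PowerSeries k) ^ (a - 1)}) →ₗ[PowerSeries k]
          ((PowerSeries k ⧸ Ideal.span {(X : PowerSeries k) ^ a}) ×
            (PowerSeries k ⧸ Ideal.span {(X : PowerSeries k) ^ b})))
        (g : ((PowerSeries k ⧸ Ideal.span {(X : PowerSeries k) ^ a}) ×
            (PowerSeries k ⧸ Ideal.span {(X : PowerSeries k) ^ b})) →ₗ[PowerSeries k]
          (PowerSeries k ⧸ Ideal.span {(X : PowerSeries k) ^ (b + 1)})),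
        Function.Injective f ∧ Function.Surjective g ∧ Function.Exact f g ∧
        f 1 = (Ideal.Quotient.mk _ (X : PowerSeries k), 1)) ∧
    DegeneratesByExt (PowerSeries k)
      ((PowerSeries k ⧸ Ideal.span {(X : PowerSeries k) ^ a}) ×
        (PowerSeries k ⧸ Ideal.span {(X : PowerSeries k) ^ b}))
      ((PowerSeries k ⧸ Ideal.span {(X : PowerSeries k) ^ (a - 1)}) ×
        (PowerSeries k ⧸ Ideal.span {(X : PowerSeries k) ^ (b + 1)})) :=
  stmt5_general k a b hab
end

section
/- Let R = k[[x]] over a field k, and let M, N be R-modules of length n with partitions p_M and p_N. If p_M ⊵ p_N in the dominance order, then N is obtained from M by an iteration of degenerations by extensions (M ≤_ext N). -/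
/-
If `p ⊵ q` and `p ≠ q`, move one box of `p` from row `i` to row `j > i`, where `i` is the first
row in which `p` and `q` differ and `j` the first later row with `p j < q j`. The partial sums
of `p` strictly exceed those of `q` between rows `i` and `j`, so the new sequence (not
necessarily a partition) still dominates `q`; its partial sums are smaller, so this terminates. Each move
is a degeneration by an extension: for `x` regular and `b ≤ a`,
`0 → R/x^a → R/x^(a+1) ⊕ R/x^b → R/x^(b+1) → 0`, `r ↦ (x r, r)`, `(u, v) ↦ u - x v`
is exact, and the remaining cyclic summands are carried along as a direct factor.
-/

/-- `p : ℕ → ℕ` (indices `0, …, n-1` corresponding to `p_1, …, p_n`) is a partition of `n`. -/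
def IsPartitionOf (n : ℕ) (p : ℕ → ℕ) : Prop :=
  (∀ i, p (i + 1) ≤ p i) ∧ (∀ i, n ≤ i → p i = 0) ∧ (∑ i ∈ Finset.range n, p i) = n

/-- The dominance order on partitions. -/
def Dominates (p q : ℕ → ℕ) : Prop :=
  ∀ j, (∑ i ∈ Finset.range j, q i) ≤ ∑ i ∈ Finset.range j, p i

/-- `M ≤_ext N`: `N` is obtained from `M` by a finite chain of degenerations by
extensions. -/
def ExtLE (R : Type) [CommRing R] : ModuleCat.{0} R → ModuleCat.{0} R → Prop :=
  Relation.ReflTransGen (fun A B => DegeneratesByExt R A B)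

def LinearEquiv.piSplitAt (R : Type*) [Semiring R] {ι : Type*} [DecidableEq ι] (i : ι)
    (φ : ι → Type*) [∀ l, AddCommMonoid (φ l)] [∀ l, Module R (φ l)] :
    (∀ l, φ l) ≃ₗ[R] φ i × ∀ l : {l // l ≠ i}, φ l :=
  { Equiv.piSplitAt i φ with
    map_add' := fun _ _ => rfl
    map_smul' := fun _ _ => rfl }

namespace DegeneratesByExt

variable {R : Type} [CommRing R] {A B A' B' U V W : Type}
  [AddCommGroup A] [Module R A] [AddCommGroup B] [Module R B]
  [AddCommGroup A'] [Module R A'] [AddCommGroup B'] [Module R B']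
  [AddCommGroup U] [Module R U] [AddCommGroup V] [Module R V] [AddCommGroup W] [Module R W]

theorem of_exact {f : U →ₗ[R] A} {g : A →ₗ[R] V} (hf : Function.Injective f)
    (hg : Function.Surjective g) (hfg : Function.Exact f g) (e : B ≃ₗ[R] U × V) :
    DegeneratesByExt R A B :=
  ⟨LinearMap.range f, ⟨e.trans <|
    (LinearEquiv.ofInjective f hf).prodCongr (hfg.linearEquivOfSurjective hg).symm⟩⟩

theorem of_linearEquiv (e : A ≃ₗ[R] B) : DegeneratesByExt R A B :=
  ⟨⊥, ⟨e.symm.trans <| (Submodule.quotEquivOfEqBot ⊥ rfl).symm.trans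
    (LinearEquiv.uniqueProd (M₂ := (⊥ : Submodule R A))).symm⟩⟩

theorem congr (eA : A ≃ₗ[R] A') (eB : B ≃ₗ[R] B') (h : DegeneratesByExt R A B) :
    DegeneratesByExt R A' B' := by
  obtain ⟨U, ⟨e⟩⟩ := h
  exact ⟨U.map (eA : A →ₗ[R] A'), ⟨eB.symm.trans <| e.trans <|
    (eA.submoduleMap U).prodCongr (Submodule.Quotient.equiv U _ eA rfl)⟩⟩

theorem prod_right (h : DegeneratesByExt R A B) : DegeneratesByExt R (A × W) (B × W) := by
  obtain ⟨U, ⟨e⟩⟩ := h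
  refine of_exact (f := LinearMap.inl R A W ∘ₗ U.subtype) (g := U.mkQ.prodMap LinearMap.id)
    (LinearMap.inl_injective.comp U.injective_subtype)
    (U.mkQ_surjective.prodMap Function.surjective_id) ?_
    ((e.prodCongr (LinearEquiv.refl R W)).trans (LinearEquiv.prodAssoc R _ _ _))
  rintro ⟨a, w⟩
  simp [Submodule.Quotient.mk_eq_zero, eq_comm (a := (0 : W))]

theorem pi_of_pair {ι : Type} [DecidableEq ι] {φ ψ : ι → Type} [∀ l, AddCommGroup (φ l)]
    [∀ l, Module R (φ l)] [∀ l, AddCommGroup (ψ l)] [∀ l, Module R (ψ l)] {i j : ι}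
    (hij : i ≠ j) (h : DegeneratesByExt R (φ i × φ j) (ψ i × ψ j))
    (e : ∀ l, l ≠ i → l ≠ j → (φ l ≃ₗ[R] ψ l)) :
    DegeneratesByExt R (∀ l, φ l) (∀ l, ψ l) := by
  let split (χ : ι → Type) [∀ l, AddCommGroup (χ l)] [∀ l, Module R (χ l)] :
      (∀ l, χ l) ≃ₗ[R] (χ i × χ j) × ∀ m : {m : {l // l ≠ i} // m ≠ ⟨j, hij.symm⟩}, χ m :=
    (LinearEquiv.piSplitAt R i χ).trans <|
      ((LinearEquiv.refl R _).prodCongr (LinearEquiv.piSplitAt R ⟨j, hij.symm⟩ _)).trans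
        (LinearEquiv.prodAssoc R _ _ _).symm
  refine h.prod_right.congr (split φ).symm <|
    ((LinearEquiv.refl R _).prodCongr <| LinearEquiv.piCongrRight
      fun m : {m : {l // l ≠ i} // m ≠ ⟨j, hij.symm⟩} =>
        e m m.1.2 fun hj => m.2 (Subtype.ext hj)).trans (split ψ).symm

end DegeneratesByExt

theorem span_pow_le_comap_mulLeft {R : Type} [CommRing R] (x : R) (c : ℕ) :
    Ideal.span {x ^ c} ≤ Submodule.comap (LinearMap.mulLeft R x) (Ideal.span {x ^ (c + 1)}) :=
  Submodule.span_le.mpr <| Set.singleton_subset_iff.mpr <|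
    Ideal.mem_span_singleton.mpr (pow_succ' x c).dvd

open Submodule in
theorem degeneratesByExt_quotient_pow {R : Type} [CommRing R] {x : R} (hx : IsLeftRegular x)
    {a b : ℕ} (hba : b ≤ a) :
    DegeneratesByExt R ((R ⧸ Ideal.span {x ^ (a + 1)}) × (R ⧸ Ideal.span {x ^ b}))
      ((R ⧸ Ideal.span {x ^ a}) × (R ⧸ Ideal.span {x ^ (b + 1)})) := by
  have span_pow_le {c d : ℕ} (h : c ≤ d) : Ideal.span {x ^ d} ≤ Ideal.span {x ^ c} :=
    Ideal.span_singleton_le_span_singleton.mpr (pow_dvd_pow x h)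
  let f := (mapQ _ _ _ (span_pow_le_comap_mulLeft x a)).prod (factor (span_pow_le hba))
  let g := factor (span_pow_le (Nat.add_le_add_right hba 1)) ∘ₗ LinearMap.fst R _ _ -
    mapQ _ _ _ (span_pow_le_comap_mulLeft x b) ∘ₗ LinearMap.snd R _ _
  have hf (r : R) :
      f (Submodule.Quotient.mk r) = (Submodule.Quotient.mk (x * r), Submodule.Quotient.mk r) :=
    rfl
  have hg (u v : R) : g (Submodule.Quotient.mk u, Submodule.Quotient.mk v) =
      Submodule.Quotient.mk (u - x * v) :=
    (Submodule.Quotient.mk_sub _).symm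
  refine .of_exact (f := f) (g := g) ?_ ?_ ?_ (LinearEquiv.refl R _)
  · rw [injective_iff_map_eq_zero]
    intro y hy
    obtain ⟨r, rfl⟩ := Submodule.Quotient.mk_surjective _ y
    rw [hf, Prod.mk_eq_zero, Submodule.Quotient.mk_eq_zero, Ideal.mem_span_singleton] at hy
    obtain ⟨⟨c, hc⟩, -⟩ := hy
    rw [Submodule.Quotient.mk_eq_zero, Ideal.mem_span_singleton]
    exact ⟨c, hx (show x * r = x * (x ^ a * c) by rw [hc]; ring)⟩
  · intro z
    obtain ⟨u, rfl⟩ := Submodule.Quotient.mk_surjective _ z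
    exact ⟨(Submodule.Quotient.mk u, Submodule.Quotient.mk 0), by rw [hg, mul_zero, sub_zero]⟩
  · rintro ⟨y, z⟩
    obtain ⟨u, rfl⟩ := Submodule.Quotient.mk_surjective _ y
    obtain ⟨v, rfl⟩ := Submodule.Quotient.mk_surjective _ z
    rw [hg, Submodule.Quotient.mk_eq_zero, Ideal.mem_span_singleton]
    constructor
    · rintro ⟨w, hw⟩
      refine ⟨Submodule.Quotient.mk (v + x ^ b * w), ?_⟩
      rw [hf, Prod.mk.injEq, Submodule.Quotient.eq, Submodule.Quotient.eq,
        Ideal.mem_span_singleton, Ideal.mem_span_singleton]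
      exact ⟨⟨0, by linear_combination -hw⟩, ⟨w, by ring⟩⟩
    · rintro ⟨r', hr⟩
      obtain ⟨r, rfl⟩ := Submodule.Quotient.mk_surjective _ r'
      rw [hf, Prod.mk.injEq, Submodule.Quotient.eq, Submodule.Quotient.eq,
        Ideal.mem_span_singleton, Ideal.mem_span_singleton] at hr
      obtain ⟨⟨c, hc⟩, ⟨d, hd⟩⟩ := hr
      obtain ⟨t, rfl⟩ := Nat.exists_eq_add_of_le hba
      exact ⟨d - x ^ t * c, by linear_combination -hc + x * hd⟩

def moveBox (p : ℕ → ℕ) (i j : ℕ) : ℕ → ℕ :=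
  Function.update (Function.update p i (p i - 1)) j (p j + 1)

section MoveBox
open Finset

variable {p q : ℕ → ℕ} {i j : ℕ}

theorem moveBox_add_ite (hi : 0 < p i) (hij : i ≠ j) (m : ℕ) :
    moveBox p i j m + (if m = i then 1 else 0) = p m + (if m = j then 1 else 0) := by
  simp only [moveBox, Function.update_apply]
  split_ifs <;> subst_vars <;> omega

theorem sum_range_moveBox_add_ite (hi : 0 < p i) (hij : i ≠ j) (l : ℕ) :
    ∑ m ∈ range l, moveBox p i j m + (if i < l then 1 else 0) =
      ∑ m ∈ range l, p m + (if j < l then 1 else 0) := by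
  have h := sum_congr rfl fun m (_ : m ∈ range l) => moveBox_add_ite hi hij m
  simpa [sum_add_distrib] using h

theorem Dominates.exists_strict_segment {n : ℕ} (hdom : Dominates p q)
    (hq : Antitone q) (hsum : ∑ m ∈ range n, p m = ∑ m ∈ range n, q m)
    (hne : ∃ m < n, p m ≠ q m) :
    ∃ i j, i < j ∧ j < n ∧ p j < p i ∧
      ∀ l, i < l → l ≤ j → ∑ m ∈ range l, q m < ∑ m ∈ range l, p m := by
  classical
  set i := Nat.find hne
  obtain ⟨hin, hpqi⟩ : i < n ∧ p i ≠ q i := Nat.find_spec hne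
  have heq_before (m : ℕ) (hm : m < i) : p m = q m :=
    not_not.mp fun h => Nat.find_min hne hm ⟨hm.trans hin, h⟩
  have hqi : q i < p i := by
    have hprefix : ∑ m ∈ range i, q m = ∑ m ∈ range i, p m :=
      sum_congr rfl fun m hm => (heq_before m (mem_range.mp hm)).symm
    have h := hdom (i + 1)
    rw [sum_range_succ, sum_range_succ, hprefix] at h
    omega
  have hle_upto (m : ℕ) (hm : m ≤ i) : q m ≤ p m := by
    rcases hm.lt_or_eq with hm | rfl
    · exact (heq_before m hm).ge
    · exact hqi.le
  have hexj : ∃ j, i < j ∧ j < n ∧ p j < q j := by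
    by_contra! h
    have : ∑ m ∈ range n, q m < ∑ m ∈ range n, p m :=
      sum_lt_sum (fun m hm => (le_or_gt m i).elim (hle_upto m) fun him =>
        h m him (mem_range.mp hm)) ⟨i, mem_range.mpr hin, hqi⟩
    omega
  set j := Nat.find hexj
  obtain ⟨hij, hjn, hpqj⟩ : i < j ∧ j < n ∧ p j < q j := Nat.find_spec hexj
  have hle_between (m : ℕ) (him : i < m) (hmj : m < j) : q m ≤ p m :=
    not_lt.mp fun h => Nat.find_min hexj hmj ⟨him, hmj.trans hjn, h⟩
  refine ⟨i, j, hij, hjn, by have := hq hij.le; omega, fun l hil hlj => ?_⟩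
  refine sum_lt_sum (fun m hm => ?_) ⟨i, mem_range.mpr hil, hqi⟩
  exact (le_or_gt m i).elim (hle_upto m) fun him => hle_between m him (by
    have := mem_range.mp hm; omega)

theorem Dominates.moveBox (hdom : Dominates p q) (hi : 0 < p i) (hij : i < j)
    (hstrict : ∀ l, i < l → l ≤ j → ∑ m ∈ range l, q m < ∑ m ∈ range l, p m) :
    Dominates (moveBox p i j) q := by
  intro l
  have key := sum_range_moveBox_add_ite hi hij.ne l
  have := hdom l
  split_ifs at key with hil hjl
  · omega
  · have := hstrict l hil (not_lt.mp hjl)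
    omega
  all_goals omega

end MoveBox

section DominanceChain
open Finset

variable {R : Type} [CommRing R] {x : R}

theorem degeneratesByExt_pi_moveBox (hx : IsLeftRegular x) {n : ℕ} (p : ℕ → ℕ) {i j : ℕ}
    (hi : i < n) (hj : j < n) (hij : i ≠ j) (hp : p j < p i) :
    DegeneratesByExt R (∀ l : Fin n, R ⧸ Ideal.span {x ^ p l})
      (∀ l : Fin n, R ⧸ Ideal.span {x ^ moveBox p i j l}) := by
  have hpi : moveBox p i j i = p i - 1 := by simp [moveBox, hij]
  have hpj : moveBox p i j j = p j + 1 := by simp [moveBox]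
  have hpl (l : ℕ) (hli : l ≠ i) (hlj : l ≠ j) : moveBox p i j l = p l := by
    simp [moveBox, hli, hlj]
  refine DegeneratesByExt.pi_of_pair (i := ⟨i, hi⟩) (j := ⟨j, hj⟩) (Fin.ne_of_val_ne hij) ?_
    fun l hli hlj => Submodule.quotEquivOfEq _ _ <| by
      rw [hpl l (Fin.val_ne_of_ne hli) (Fin.val_ne_of_ne hlj)]
  refine (degeneratesByExt_quotient_pow hx (a := p i - 1) (b := p j) (by omega)).congr
    ((Submodule.quotEquivOfEq _ _ ?_).prodCongr (LinearEquiv.refl R _))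
    ((Submodule.quotEquivOfEq _ _ ?_).prodCongr (Submodule.quotEquivOfEq _ _ ?_))
  · rw [Nat.sub_add_cancel (by omega : 1 ≤ p i)]
  · rw [hpi]
  · rw [hpj]

theorem extLE_pi_quotient_pow_of_dominates (hx : IsLeftRegular x) {n : ℕ} {q : ℕ → ℕ}
    (hq : Antitone q) (p : ℕ → ℕ) (hsum : ∑ m ∈ range n, p m = ∑ m ∈ range n, q m)
    (hdom : Dominates p q) :
    ExtLE R (ModuleCat.of R (∀ l : Fin n, R ⧸ Ideal.span {x ^ p l}))
      (ModuleCat.of R (∀ l : Fin n, R ⧸ Ideal.span {x ^ q l})) := by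
  induction h : ∑ l ∈ range n, ∑ m ∈ range l, p m using Nat.strong_induction_on
    generalizing p with
  | _ s ih =>
  by_cases hne : ∃ m < n, p m ≠ q m
  · obtain ⟨i, j, hij, hjn, hp, hstrict⟩ := hdom.exists_strict_segment hq hsum hne
    have key := sum_range_moveBox_add_ite (p := p) (by omega : 0 < p i) hij.ne
    refine .head (degeneratesByExt_pi_moveBox hx p (hij.trans hjn) hjn hij.ne hp)
      (ih _ ?_ _ ?_ (hdom.moveBox (by omega) hij hstrict) rfl)
    · rw [← h]
      refine sum_lt_sum (fun l _ => ?_) ⟨j, mem_range.mpr hjn, ?_⟩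
      · have := key l
        split_ifs at this <;> omega
      · have := key j
        simp only [hij, lt_irrefl, if_true, if_false] at this
        omega
    · have := key n
      simp only [hij.trans hjn, hjn, if_true] at this
      omega
  · push Not at hne
    exact .single <| .of_linearEquiv <| LinearEquiv.piCongrRight fun l =>
      Submodule.quotEquivOfEq _ _ (by rw [hne l l.2])

end DominanceChain

open PowerSeries in
/-- Over `R = k[[x]]`, if `M`, `N` are `R`-modules of length `n` with associated
partitions `p_M ⊵ p_N` in the dominance order, then `M ≤_ext N`. -/
theorem stmt8 (k : Type) [Field k] (n : ℕ)
    (M N : Type) [AddCommGroup M] [Module (PowerSeries k) M]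
    [AddCommGroup N] [Module (PowerSeries k) N]
    (pM pN : ℕ → ℕ) (hpM : IsPartitionOf n pM) (hpN : IsPartitionOf n pN)
    (hM : Nonempty (M ≃ₗ[PowerSeries k]
      (∀ i : Fin n, PowerSeries k ⧸ Ideal.span {(X : PowerSeries k) ^ pM i})))
    (hN : Nonempty (N ≃ₗ[PowerSeries k]
      (∀ i : Fin n, PowerSeries k ⧸ Ideal.span {(X : PowerSeries k) ^ pN i})))
    (hdom : Dominates pM pN) :
    ExtLE (PowerSeries k) (ModuleCat.of (PowerSeries k) M) (ModuleCat.of (PowerSeries k) N) := by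
  obtain ⟨eM⟩ := hM
  obtain ⟨eN⟩ := hN
  have hsum : ∑ m ∈ Finset.range n, pM m = ∑ m ∈ Finset.range n, pN m := by
    rw [hpM.2.2, hpN.2.2]
  have hX : IsLeftRegular (X : PowerSeries k) := X_mul_injective
  have hchain := extLE_pi_quotient_pow_of_dominates hX (antitone_nat_of_succ_le hpN.1) pM hsum hdom
  exact .head (.of_linearEquiv eM) (hchain.tail (.of_linearEquiv eN.symm))
end
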